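/- A linear functional Z on RΛ lies in the Tits cone W·C̄_R if and only if Z(α) < 0 for only finitely many positive real roots α ∈ Φ⁺. -/

import Mathlib

noncomputable def coxEntry {B : Type*} (M : CoxeterMatrix B) (s t : B) : ℝ :=
  if M s t = 0 then -2 else -2 * Real.cos (Real.pi / (M s t))

noncomputable def coxForm {B : Type*} [Fintype B] (M : CoxeterMatrix B) (v w : B → ℝ) : ℝ :=
  ∑ s, ∑ t, v s * w t * coxEntry M s t

/-- The simple root `α_s` in `RΛ ≅ (B → ℝ)`. -/
noncomputable def simpleRoot {B : Type*} [DecidableEq B] (s : B) : B → ℝ := Pi.single s 1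

/-- The set of real roots: the `W`-orbit of the simple roots under the Tits representation. -/
def rootSet {B : Type*} [DecidableEq B] {W : Type*} [Group W]
    (ρ : W →* ((B → ℝ) ≃ₗ[ℝ] (B → ℝ))) : Set (B → ℝ) :=
  {v | ∃ (w : W) (s : B), v = ρ w (simpleRoot s)}

/-- The set of positive real roots. -/
def posRootSet {B : Type*} [DecidableEq B] {W : Type*} [Group W]
    (ρ : W →* ((B → ℝ) ≃ₗ[ℝ] (B → ℝ))) : Set (B → ℝ) :=
  {v ∈ rootSet ρ | ∀ i, 0 ≤ v i}

/-- The set `K = {v ∈ ℝ_{≥0}Λ : B(v, α_s) ≤ 0 for all s}`. -/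
noncomputable def coneK {B : Type*} [Fintype B] [DecidableEq B] (M : CoxeterMatrix B) :
    Set (B → ℝ) :=
  {v | (∀ i, 0 ≤ v i) ∧ ∀ s, coxForm M v (simpleRoot s) ≤ 0}

/-- The closed imaginary cone `I = closure (W · K)`. -/
noncomputable def imagCone {B : Type*} [Fintype B] [DecidableEq B] (M : CoxeterMatrix B)
    {W : Type*} [Group W] (ρ : W →* ((B → ℝ) ≃ₗ[ℝ] (B → ℝ))) : Set (B → ℝ) :=
  closure {v | ∃ (w : W), ∃ k ∈ coneK M, v = ρ w k}


/-- The Tits cone `T = W · C̄` in the dual space: `Z ∈ T` iff for some `w ∈ W` the functional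
`w⁻¹ · Z` is nonnegative on all simple roots, i.e. `Z` is nonnegative on `ρ w (α_s)` for all
`s`. -/
def titsCone {B : Type*} [DecidableEq B] {W : Type*} [Group W]
    (ρ : W →* ((B → ℝ) ≃ₗ[ℝ] (B → ℝ))) : Set (Module.Dual ℝ (B → ℝ)) :=
  {Z | ∃ w : W, ∀ s : B, 0 ≤ Z (ρ w (simpleRoot s))}

/-!
The heart of the proof is that every root is positive or negative: `w α_i ≥ 0` whenever
`ℓ(w s_i) > ℓ(w)`. By induction on `ℓ(w)`, pick a right descent `s_t` of `w` and write
`w = v x` with `x` an alternating word in `s_i, s_t`, `ℓ(w) = ℓ(v) + |x|` and `ℓ(v)` minimal.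
Minimality makes `s_i` and `s_t` ascents of `v`, and the ascent `s_i` of `w` forces
`|x| < m_{it}`. In the rank-two span, `x α_i = a α_i + b α_t` with coefficients
`U_n(cos(π/m_{it}))` (Chebyshev polynomials of the second kind, evaluated at `1` when
`m_{it} = ∞`), which are nonnegative for `n < m_{it}`; so `w α_i = a v α_i + b v α_t ≥ 0`.

Consequently `s_i` permutes `Φ⁺ \ {α_i}` and every inversion set `{γ ∈ Φ⁺ : w γ ∉ Φ⁺}` is finite.
If `Z(w α_s) ≥ 0` for all `s`, the negative roots of `Z` are, up to sign, images of the inversion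
set of `w`. Conversely, if `Z(α_i) < 0`, passing from `Z` to `Z ∘ s_i` removes exactly `α_i`
from the finite set of negative roots, so induction on its size reaches the fundamental chamber.
-/

open CoxeterSystem Polynomial Polynomial.Chebyshev

theorem chebyshevU_eval_cos_pi_div_nonneg {m : ℕ} (hm : 2 ≤ m) {n : ℤ} (hn : -1 ≤ n)
    (hnm : n < m) : 0 ≤ (U ℝ n).eval (Real.cos (Real.pi / m)) := by
  have hm' : (2 : ℝ) ≤ m := by exact_mod_cast hm
  have hsin : 0 < Real.sin (Real.pi / m) := by
    apply Real.sin_pos_of_pos_of_lt_pi (by positivity)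
    rw [div_lt_iff₀ (by positivity)]
    nlinarith [Real.pi_pos]
  refine nonneg_of_mul_nonneg_left ?_ hsin
  rw [U_real_cos]
  apply Real.sin_nonneg_of_nonneg_of_le_pi
  · have : (0 : ℝ) ≤ n + 1 := by exact_mod_cast (by omega : (0 : ℤ) ≤ n + 1)
    positivity
  · have : (n + 1 : ℝ) ≤ m := by exact_mod_cast (by omega : n + 1 ≤ (m : ℤ))
    calc (n + 1 : ℝ) * (Real.pi / m) ≤ m * (Real.pi / m) := by gcongr
      _ = Real.pi := by field_simp

section CoxeterForm

variable {B : Type*} {M : CoxeterMatrix B}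

theorem coxEntry_comm (i j : B) : coxEntry M i j = coxEntry M j i := by
  rw [coxEntry, coxEntry, M.symmetric]

@[simp]
theorem coxEntry_self (i : B) : coxEntry M i i = 2 := by
  simp [coxEntry]

theorem neg_coxEntry_div_two_of_eq_zero {i j : B} (h : M i j = 0) :
    -coxEntry M i j / 2 = 1 := by
  simp [coxEntry, h]

theorem neg_coxEntry_div_two_of_ne_zero {i j : B} (h : M i j ≠ 0) :
    -coxEntry M i j / 2 = Real.cos (Real.pi / M i j) := by
  simp [coxEntry, h]

theorem chebyshevU_eval_neg_coxEntry_div_two_nonneg {i j : B} (hij : i ≠ j) {n : ℤ}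
    (hn : -1 ≤ n) (hnm : M i j = 0 ∨ n < M i j) :
    0 ≤ (U ℝ n).eval (-coxEntry M i j / 2) := by
  by_cases h : M i j = 0
  · rw [neg_coxEntry_div_two_of_eq_zero h, U_eval_one]
    exact_mod_cast (by omega : (0 : ℤ) ≤ n + 1)
  · rw [neg_coxEntry_div_two_of_ne_zero h]
    have := M.off_diagonal i j hij
    exact chebyshevU_eval_cos_pi_div_nonneg (by omega) hn (hnm.resolve_left h)

variable [Fintype B]

theorem coxForm_comm (v w : B → ℝ) : coxForm M v w = coxForm M w v := by
  rw [coxForm, coxForm, Finset.sum_comm]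
  simp only [mul_comm (v _), coxEntry_comm (M := M) _ _]

variable [DecidableEq B]

variable (M) in
noncomputable def coxBilinForm : LinearMap.BilinForm ℝ (B → ℝ) :=
  Matrix.toLinearMap₂' ℝ (Matrix.of (coxEntry M))

theorem coxBilinForm_apply (v w : B → ℝ) : coxBilinForm M v w = coxForm M v w := by
  simp [coxBilinForm, coxForm, Matrix.toLinearMap₂'_apply, mul_assoc]

@[simp]
theorem coxForm_simpleRoot_simpleRoot (i j : B) :
    coxForm M (simpleRoot i) (simpleRoot j) = coxEntry M i j := by
  simp [coxForm, simpleRoot, Pi.single_apply]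

end CoxeterForm

namespace CoxeterSystem

variable {B W : Type*} [Group W] {M : CoxeterMatrix B} (cs : CoxeterSystem M W)

local prefix:100 "s" => cs.simple
local prefix:100 "π" => cs.wordProd
local prefix:100 "ℓ" => cs.length

theorem simple_mul_wordProd_alternatingWord {i j x : B} (hx : x = i ∨ x = j) {k : ℕ}
    (hk : 0 < k) :
    s x * π (alternatingWord i j k) = π (alternatingWord i j (k + 1)) ∨
      s x * π (alternatingWord i j k) = π (alternatingWord i j (k - 1)) := by
  obtain ⟨k, rfl⟩ := Nat.exists_eq_add_of_lt hk
  simp only [zero_add, Nat.add_sub_cancel]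
  by_cases hxy : x = if Even k then j else i
  · right
    rw [alternatingWord_succ', wordProd_cons, ← hxy, simple_mul_simple_cancel_left]
  · left
    have hx' : x = if Even (k + 1) then j else i := by
      simp only [Nat.even_add_one]
      split_ifs at hxy ⊢ <;> tauto
    rw [alternatingWord_succ' _ _ (k + 1), wordProd_cons, ← hx']

theorem mul_simple_mul_alternatingWord_succ {v w : W} {i t x : B} {k : ℕ} (hx : x = i ∨ x = t)
    (hk : 0 < k) (hvw : v * π (alternatingWord i t k) = w) (hvk : ℓ v + k = ℓ w)
    (hvx : ℓ (v * s x) + 1 = ℓ v) :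
    v * s x * π (alternatingWord i t (k + 1)) = w ∧ ℓ (v * s x) + (k + 1) = ℓ w := by
  have hw : v * s x * (s x * π (alternatingWord i t k)) = w := by
    rw [mul_assoc, simple_mul_simple_cancel_left, hvw]
  rcases cs.simple_mul_wordProd_alternatingWord hx hk with h | h
  · exact ⟨by rwa [← h], by omega⟩
  · rw [h] at hw
    have := cs.length_mul_le (v * s x) (π (alternatingWord i t (k - 1)))
    have := cs.length_wordProd_le (alternatingWord i t (k - 1))
    rw [hw, length_alternatingWord] at *
    omega

theorem eq_zero_or_lt_of_mul_alternatingWord_eq {v w : W} {i t : B} {k : ℕ}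
    (hvw : v * π (alternatingWord i t k) = w) (hvk : ℓ v + k = ℓ w)
    (hi : ℓ (w * s i) = ℓ w + 1) : M i t = 0 ∨ k < M i t := by
  by_contra! hk
  have hred : ¬cs.IsReduced (alternatingWord t i (k + 1)) :=
    cs.not_isReduced_alternatingWord t i (by rw [M.symmetric]; exact hk.1)
      (by rw [M.symmetric]; omega)
  have hlen := cs.length_wordProd_le (alternatingWord t i (k + 1))
  have hwi : w * s i = v * π (alternatingWord t i (k + 1)) := by
    rw [alternatingWord_succ, wordProd_concat, ← mul_assoc, hvw]
  have := cs.length_mul_le v (π (alternatingWord t i (k + 1)))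
  rw [IsReduced, length_alternatingWord] at hred
  rw [length_alternatingWord] at hlen
  rw [← hwi] at this
  omega

theorem exists_mul_alternatingWord_eq {w : W} {i t : B} (hi : ℓ (w * s i) = ℓ w + 1)
    (ht : cs.IsRightDescent w t) :
    ∃ v k, v * π (alternatingWord i t k) = w ∧ ℓ v < ℓ w ∧ ℓ (v * s i) = ℓ v + 1 ∧
      ℓ (v * s t) = ℓ v + 1 ∧ (M i t = 0 ∨ k < M i t) := by
  have ht' : ℓ (w * s t) + 1 = ℓ w :=
    (cs.length_mul_simple w t).resolve_left fun h => by
      have : ℓ (w * s t) < ℓ w := ht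
      omega
  set A : Set (W × ℕ) := {p | p.1 * π (alternatingWord i t p.2) = w ∧ ℓ p.1 + p.2 = ℓ w}
  have hwt : (w * s t, 1) ∈ A := ⟨by simp [alternatingWord], ht'⟩
  obtain ⟨⟨v, k⟩, hA, hmin⟩ :=
    (InvImage.wf (fun p : W × ℕ => ℓ p.1) wellFounded_lt).has_min A ⟨_, hwt⟩
  obtain ⟨hvw, hvk⟩ : v * π (alternatingWord i t k) = w ∧ ℓ v + k = ℓ w := hA
  have hv : ℓ v < ℓ w := by
    have : ¬ℓ (w * s t) < ℓ v := hmin _ hwt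
    omega
  have hasc : ∀ x, x = i ∨ x = t → ℓ (v * s x) = ℓ v + 1 := fun x hx =>
    (cs.length_mul_simple v x).resolve_right fun hvx =>
      hmin (v * s x, k + 1) (cs.mul_simple_mul_alternatingWord_succ hx (by omega) hvw hvk hvx)
        (show ℓ (v * s x) < ℓ v by omega)
  exact ⟨v, k, hvw, hv, hasc i (.inl rfl), hasc t (.inr rfl),
    cs.eq_zero_or_lt_of_mul_alternatingWord_eq hvw hvk hi⟩

end CoxeterSystem

section Roots

variable {B W : Type*} [DecidableEq B] [Group W] {ρ : W →* ((B → ℝ) ≃ₗ[ℝ] (B → ℝ))}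

theorem simpleRoot_nonneg (i x : B) : 0 ≤ simpleRoot i x := by
  rw [simpleRoot, Pi.single_apply]
  split_ifs <;> norm_num

theorem simpleRoot_mem_posRootSet (i : B) : simpleRoot i ∈ posRootSet ρ :=
  ⟨⟨1, i, by simp⟩, simpleRoot_nonneg i⟩

theorem apply_mem_rootSet (w : W) {α : B → ℝ} (hα : α ∈ rootSet ρ) : ρ w α ∈ rootSet ρ := by
  obtain ⟨w', i, rfl⟩ := hα
  exact ⟨w * w', i, by rw [map_mul, LinearEquiv.mul_apply]⟩

theorem ne_zero_of_mem_rootSet {α : B → ℝ} (hα : α ∈ rootSet ρ) : α ≠ 0 := by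
  obtain ⟨w, i, rfl⟩ := hα
  simp [simpleRoot]

theorem neg_notMem_posRootSet {α : B → ℝ} (hα : α ∈ posRootSet ρ) : -α ∉ posRootSet ρ :=
  fun hneg => ne_zero_of_mem_rootSet hα.1 <| funext fun x =>
    le_antisymm (by simpa using hneg.2 x) (hα.2 x)

theorem apply_nonneg_of_simpleRoot_nonneg [Fintype B] (f : Module.Dual ℝ (B → ℝ))
    (hf : ∀ i, 0 ≤ f (simpleRoot i)) {v : B → ℝ} (hv : ∀ x, 0 ≤ v x) : 0 ≤ f v := by
  have hsum : v = ∑ x, v x • simpleRoot x := by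
    ext y
    simp [simpleRoot, Pi.single_apply]
  rw [hsum, map_sum]
  exact Finset.sum_nonneg fun x _ => by rw [map_smul, smul_eq_mul]; exact mul_nonneg (hv x) (hf x)

theorem mem_titsCone_of_comp (w : W) {Z : Module.Dual ℝ (B → ℝ)}
    (hZ : Z ∘ₗ (ρ w).toLinearMap ∈ titsCone ρ) : Z ∈ titsCone ρ := by
  obtain ⟨v, hv⟩ := hZ
  exact ⟨w * v, fun i => by simpa [map_mul, LinearEquiv.mul_apply] using hv i⟩

def inversionSet (ρ : W →* ((B → ℝ) ≃ₗ[ℝ] (B → ℝ))) (w : W) : Set (B → ℝ) :=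
  {γ | γ ∈ posRootSet ρ ∧ ρ w γ ∉ posRootSet ρ}

def negativeRoots (ρ : W →* ((B → ℝ) ≃ₗ[ℝ] (B → ℝ))) (Z : Module.Dual ℝ (B → ℝ)) :
    Set (B → ℝ) :=
  {α | α ∈ posRootSet ρ ∧ Z α < 0}

end Roots

section TitsRepresentation

variable {B W : Type*} [Fintype B] [DecidableEq B] [Group W] {M : CoxeterMatrix B}

def IsTitsRepresentation (cs : CoxeterSystem M W) (ρ : W →* ((B → ℝ) ≃ₗ[ℝ] (B → ℝ))) : Prop :=
  ∀ (s : B) (v : B → ℝ), ρ (cs.simple s) v = v - coxForm M (simpleRoot s) v • simpleRoot s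

namespace IsTitsRepresentation

variable {cs : CoxeterSystem M W} {ρ : W →* ((B → ℝ) ≃ₗ[ℝ] (B → ℝ))}
  (hρ : IsTitsRepresentation cs ρ)
include hρ

theorem apply_simple_simpleRoot (i j : B) :
    ρ (cs.simple i) (simpleRoot j) = simpleRoot j - coxEntry M i j • simpleRoot i := by
  rw [hρ, coxForm_simpleRoot_simpleRoot]

theorem apply_simple_simpleRoot_self (i : B) :
    ρ (cs.simple i) (simpleRoot i) = -simpleRoot i := by
  rw [hρ.apply_simple_simpleRoot, coxEntry_self, two_smul, sub_add_cancel_left]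

theorem coxForm_apply_apply (w : W) (x y : B → ℝ) :
    coxForm M (ρ w x) (ρ w y) = coxForm M x y := by
  induction w using cs.simple_induction generalizing x y with
  | simple i =>
    simp only [hρ i, ← coxBilinForm_apply, map_sub, map_smul, LinearMap.sub_apply,
      LinearMap.smul_apply, smul_eq_mul]
    simp only [coxBilinForm_apply, coxForm_simpleRoot_simpleRoot, coxEntry_self,
      coxForm_comm x (simpleRoot i)]
    ring
  | one => simp
  | mul w w' hw hw' => rw [map_mul, LinearEquiv.mul_apply, LinearEquiv.mul_apply, hw, hw']

theorem apply_alternatingWord_simpleRoot (i j : B) (k : ℕ) :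
    ρ (cs.wordProd (alternatingWord i j k)) (simpleRoot i) =
      (U ℝ (if Even k then k else k - 1)).eval (-coxEntry M i j / 2) • simpleRoot i +
        (U ℝ (if Even k then k - 1 else k)).eval (-coxEntry M i j / 2) • simpleRoot j := by
  induction k with
  | zero => simp [alternatingWord]
  | succ k ih =>
    rw [alternatingWord_succ', cs.wordProd_cons, map_mul, LinearEquiv.mul_apply, ih]
    by_cases hk : Even k <;>
    · simp only [hk, Nat.even_add_one, not_true, not_false_eq_true, if_true, if_false, map_add,
        map_smul, hρ.apply_simple_simpleRoot, coxEntry_self, coxEntry_comm j i]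
      push_cast
      simp only [U_add_one, add_sub_cancel_right, eval_sub, eval_mul, eval_X, eval_ofNat]
      module

theorem exists_nonneg_apply_alternatingWord_simpleRoot {i j : B} (hij : i ≠ j) {k : ℕ}
    (hk : M i j = 0 ∨ k < M i j) :
    ∃ a b : ℝ, 0 ≤ a ∧ 0 ≤ b ∧
      ρ (cs.wordProd (alternatingWord i j k)) (simpleRoot i) =
        a • simpleRoot i + b • simpleRoot j :=
  ⟨_, _, chebyshevU_eval_neg_coxEntry_div_two_nonneg hij (by split_ifs <;> omega)
      (by split_ifs <;> omega),
    chebyshevU_eval_neg_coxEntry_div_two_nonneg hij (by split_ifs <;> omega)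
      (by split_ifs <;> omega),
    hρ.apply_alternatingWord_simpleRoot i j k⟩

theorem apply_simpleRoot_nonneg {w : W} {i : B} (hw : cs.length (w * cs.simple i) = cs.length w + 1)
    (x : B) : 0 ≤ ρ w (simpleRoot i) x := by
  induction hn : cs.length w using Nat.strong_induction_on generalizing w i with
  | _ n ih =>
    rcases eq_or_ne w 1 with rfl | hw1
    · simpa using simpleRoot_nonneg i x
    obtain ⟨t, ht⟩ := cs.exists_rightDescent_of_ne_one hw1
    have hit : i ≠ t := by
      rintro rfl
      have : cs.length (w * cs.simple i) < cs.length w := ht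
      omega
    obtain ⟨v, k, rfl, hv, hvi, hvt, hk⟩ := cs.exists_mul_alternatingWord_eq hw ht
    obtain ⟨a, b, ha, hb, hab⟩ := hρ.exists_nonneg_apply_alternatingWord_simpleRoot hit hk
    rw [map_mul, LinearEquiv.mul_apply, hab, map_add, map_smul, map_smul]
    exact add_nonneg (mul_nonneg ha (ih _ (hn ▸ hv) hvi rfl))
      (mul_nonneg hb (ih _ (hn ▸ hv) hvt rfl))

theorem neg_mem_rootSet {α : B → ℝ} (hα : α ∈ rootSet ρ) : -α ∈ rootSet ρ := by
  obtain ⟨w, i, rfl⟩ := hα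
  exact ⟨w * cs.simple i, i, by
    rw [map_mul, LinearEquiv.mul_apply, hρ.apply_simple_simpleRoot_self, map_neg]⟩

theorem coxForm_self_of_mem_rootSet {α : B → ℝ} (hα : α ∈ rootSet ρ) : coxForm M α α = 2 := by
  obtain ⟨w, i, rfl⟩ := hα
  rw [hρ.coxForm_apply_apply, coxForm_simpleRoot_simpleRoot, coxEntry_self]

theorem nonneg_or_nonpos_of_mem_rootSet {α : B → ℝ} (hα : α ∈ rootSet ρ) :
    (∀ x, 0 ≤ α x) ∨ ∀ x, α x ≤ 0 := by
  obtain ⟨w, i, rfl⟩ := hα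
  rcases cs.length_mul_simple w i with h | h
  · exact .inl (hρ.apply_simpleRoot_nonneg h)
  · refine .inr fun x => ?_
    have h' : cs.length (w * cs.simple i * cs.simple i) = cs.length (w * cs.simple i) + 1 := by
      rw [simple_mul_simple_cancel_right]
      omega
    have := hρ.apply_simpleRoot_nonneg h' x
    rw [map_mul, LinearEquiv.mul_apply, hρ.apply_simple_simpleRoot_self, map_neg] at this
    simpa using this

theorem apply_simple_mem_posRootSet {α : B → ℝ} {i : B} (hα : α ∈ posRootSet ρ)
    (hne : α ≠ simpleRoot i) : ρ (cs.simple i) α ∈ posRootSet ρ := by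
  have hroot := apply_mem_rootSet (cs.simple i) hα.1
  refine ⟨hroot, (hρ.nonneg_or_nonpos_of_mem_rootSet hroot).resolve_right fun hnonpos => hne ?_⟩
  have hoff : ∀ x ≠ i, α x = 0 := fun x hx => by
    have := hnonpos x
    simp only [hρ i, Pi.sub_apply, Pi.smul_apply, simpleRoot, Pi.single_apply, hx, if_false,
      smul_zero, sub_zero] at this
    linarith [hα.2 x]
  have hα_eq : α = α i • simpleRoot i := by
    ext x
    by_cases hx : x = i
    · simp [hx, simpleRoot]
    · simp [simpleRoot, hx, hoff x hx]
  have hnorm := hρ.coxForm_self_of_mem_rootSet hα.1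
  rw [hα_eq, ← coxBilinForm_apply] at hnorm
  simp only [map_smul, LinearMap.smul_apply, smul_eq_mul, coxBilinForm_apply,
    coxForm_simpleRoot_simpleRoot, coxEntry_self] at hnorm
  have hαi : α i = 1 := by nlinarith [hα.2 i]
  rw [hα_eq, hαi, one_smul]

theorem inversionSet_finite (w : W) : (inversionSet ρ w).Finite := by
  induction w using cs.simple_induction_left with
  | one => simp [inversionSet]
  | mul_simple_left w i ih =>
    refine (ih.union (Set.finite_singleton (ρ w⁻¹ (simpleRoot i)))).subset
      fun γ ⟨hγ, hγw⟩ => ?_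
    by_cases hpos : ρ w γ ∈ posRootSet ρ
    · have : ρ w γ = simpleRoot i := by
        by_contra hne
        rw [map_mul, LinearEquiv.mul_apply] at hγw
        exact hγw (hρ.apply_simple_mem_posRootSet hpos hne)
      right
      rw [← this, ← LinearEquiv.mul_apply, ← map_mul, inv_mul_cancel, map_one]
      rfl
    · exact .inl ⟨hγ, hpos⟩

theorem negativeRoots_finite_of_mem_titsCone {Z : Module.Dual ℝ (B → ℝ)}
    (hZ : Z ∈ titsCone ρ) : (negativeRoots ρ Z).Finite := by
  obtain ⟨w, hw⟩ := hZ
  refine ((hρ.inversionSet_finite w).image fun γ => -ρ w γ).subset fun α ⟨hα, hZα⟩ => ?_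
  have hβ := apply_mem_rootSet w⁻¹ hα.1
  rcases hρ.nonneg_or_nonpos_of_mem_rootSet hβ with hnonneg | hnonpos
  · have := apply_nonneg_of_simpleRoot_nonneg (Z ∘ₗ (ρ w).toLinearMap) hw hnonneg
    simp only [map_inv, LinearEquiv.coe_inv, LinearMap.coe_comp, LinearEquiv.coe_coe,
      Function.comp_apply, LinearEquiv.apply_symm_apply] at this
    exact (hZα.not_ge this).elim
  · refine ⟨-ρ w⁻¹ α, ⟨⟨hρ.neg_mem_rootSet hβ, fun x => by simpa using hnonpos x⟩, ?_⟩, by simp⟩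
    simpa using neg_notMem_posRootSet hα

theorem negativeRoots_comp_simple {Z : Module.Dual ℝ (B → ℝ)} {i : B}
    (hi : Z (simpleRoot i) < 0) :
    negativeRoots ρ (Z ∘ₗ (ρ (cs.simple i)).toLinearMap) =
      ρ (cs.simple i) '' (negativeRoots ρ Z \ {simpleRoot i}) := by
  have hinv : ∀ v, ρ (cs.simple i) (ρ (cs.simple i) v) = v := by
    simp [← LinearEquiv.mul_apply, ← map_mul]
  ext α
  constructor
  · rintro ⟨hα, hZα⟩
    have hne : α ≠ simpleRoot i := by
      rintro rfl
      simp only [LinearMap.coe_comp, LinearEquiv.coe_coe, Function.comp_apply,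
        hρ.apply_simple_simpleRoot_self, map_neg, Left.neg_neg_iff] at hZα
      exact hZα.not_gt hi
    refine ⟨ρ (cs.simple i) α, ⟨⟨hρ.apply_simple_mem_posRootSet hα hne, hZα⟩, fun h => ?_⟩, hinv α⟩
    apply neg_notMem_posRootSet (simpleRoot_mem_posRootSet (ρ := ρ) i)
    rwa [← hρ.apply_simple_simpleRoot_self, ← Set.mem_singleton_iff.1 h, hinv]
  · rintro ⟨β, ⟨⟨hβ, hZβ⟩, hne⟩, rfl⟩
    exact ⟨hρ.apply_simple_mem_posRootSet hβ hne, by simpa [hinv]⟩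

theorem mem_titsCone_of_negativeRoots_finite {Z : Module.Dual ℝ (B → ℝ)}
    (hfin : (negativeRoots ρ Z).Finite) : Z ∈ titsCone ρ := by
  induction hn : (negativeRoots ρ Z).ncard using Nat.strong_induction_on generalizing Z with
  | _ n ih =>
    by_cases hZ : ∀ i, 0 ≤ Z (simpleRoot i)
    · exact ⟨1, by simpa using hZ⟩
    simp only [not_forall, not_le] at hZ
    obtain ⟨i, hi⟩ := hZ
    have hmem : simpleRoot i ∈ negativeRoots ρ Z := ⟨simpleRoot_mem_posRootSet i, hi⟩
    have hn0 : 0 < n := hn ▸ (Set.ncard_pos hfin).2 ⟨_, hmem⟩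
    refine mem_titsCone_of_comp (cs.simple i) (ih (n - 1) (by omega) ?_ ?_) <;>
      rw [hρ.negativeRoots_comp_simple hi]
    · exact hfin.sdiff.image _
    · rw [Set.ncard_image_of_injective _ (ρ _).injective, Set.ncard_sdiff_singleton_of_mem hmem, hn]

end IsTitsRepresentation

end TitsRepresentation

theorem mem_titsCone_iff_finite_negatives
    {B : Type*} [Fintype B] [DecidableEq B] (M : CoxeterMatrix B)
    {W : Type*} [Group W] (cs : CoxeterSystem M W)
    (ρ : W →* ((B → ℝ) ≃ₗ[ℝ] (B → ℝ)))
    (hρ : ∀ (s : B) (v : B → ℝ),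
      ρ (cs.simple s) v = v - coxForm M (simpleRoot s) v • simpleRoot s)
    (Z : Module.Dual ℝ (B → ℝ)) :
    Z ∈ titsCone ρ ↔ {α | α ∈ posRootSet ρ ∧ Z α < 0}.Finite := by
  have hρ' : IsTitsRepresentation cs ρ := hρ
  exact ⟨hρ'.negativeRoots_finite_of_mem_titsCone, hρ'.mem_titsCone_of_negativeRoots_finite⟩
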